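/- Proximal mapping characterization: for g = ½‖·‖_{F,r*}² (half square of the low-rank inducing Frobenius norm) and any real n×m matrix Z with rank(Z) ≤ r and any γ > 0, prox_{γg}( (1+γ) Z ) = Z. -/

import Mathlib

open Matrix BigOperators Finset

/-- Singular values of a real `n × m` matrix, in nonincreasing order, 0-indexed:
`sv M 0 ≥ sv M 1 ≥ …` are the singular values (square roots of the eigenvalues of `Mᵀ M`). -/
noncomputable def sv {n m : ℕ} (M : Matrix (Fin n) (Fin m) ℝ) (i : ℕ) : ℝ :=
  (((List.ofFn fun j : Fin m =>
      Real.sqrt ((show (Mᵀ * M).IsHermitian by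
        simpa [Matrix.conjTranspose_eq_transpose_of_trivial] using
          Matrix.isHermitian_conjTranspose_mul_self M).eigenvalues j)).mergeSort
      (fun a b => decide (a ≥ b))).getD i 0)

/-- Trace inner product `⟨M, Y⟩ = tr (Mᵀ Y)`. -/
def ip {n m : ℕ} (M Y : Matrix (Fin n) (Fin m) ℝ) : ℝ := ∑ i, ∑ j, M i j * Y i j

/-- Frobenius norm. -/
noncomputable def fro {n m : ℕ} (M : Matrix (Fin n) (Fin m) ℝ) : ℝ :=
  Real.sqrt (∑ i, ∑ j, M i j ^ 2)

/-- Truncated Frobenius norm `‖M‖_{F,r} = sqrt (σ₁² + ⋯ + σᵣ²)`. -/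
noncomputable def truncFro {n m : ℕ} (r : ℕ) (M : Matrix (Fin n) (Fin m) ℝ) : ℝ :=
  Real.sqrt (∑ i ∈ Finset.range r, sv M i ^ 2)

/-- Dual norm with respect to the trace inner product. -/
noncomputable def dualNorm {n m : ℕ} (ν : Matrix (Fin n) (Fin m) ℝ → ℝ)
    (M : Matrix (Fin n) (Fin m) ℝ) : ℝ :=
  sSup {c : ℝ | ∃ Y, ν Y ≤ 1 ∧ c = ip M Y}

/-- Low-rank inducing Frobenius norm `‖·‖_{F,r*}`, the dual of `‖·‖_{F,r}`. -/
noncomputable def lowRankFro {n m : ℕ} (r : ℕ) (M : Matrix (Fin n) (Fin m) ℝ) : ℝ :=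
  dualNorm (truncFro r) M

/-- Ky Fan `r`-norm: sum of the `r` largest singular values. -/
noncomputable def kyFan {n m : ℕ} (r : ℕ) (M : Matrix (Fin n) (Fin m) ℝ) : ℝ :=
  ∑ i ∈ Finset.range r, sv M i

/-- Nuclear norm: sum of all singular values. -/
noncomputable def nuclear {n m : ℕ} (M : Matrix (Fin n) (Fin m) ℝ) : ℝ :=
  ∑ i ∈ Finset.range (min n m), sv M i

/-!
Write `‖·‖_*` for `lowRankFro r`, the dual of `‖·‖_{F,r} = truncFro r`. Since `‖Y‖_{F,r} ≤ ‖Y‖_F`,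
testing against `Y = M / ‖M‖_F` gives `‖M‖_F ≤ ‖M‖_*`. Conversely, if `rank Z ≤ r`, then
`⟨Z, Y⟩ = ∑ⱼ ⟨Z qⱼ, Y qⱼ⟩` over the at most `r` eigenvectors `qⱼ` of `ZᵀZ` with nonzero
eigenvalue, and Ky Fan's maximum principle `∑ⱼ ‖Y qⱼ‖² ≤ σ₁(Y)² + ⋯ + σᵣ(Y)²` together with
Cauchy–Schwarz gives `⟨Z, Y⟩ ≤ ‖Z‖_F ‖Y‖_{F,r}`, hence `‖Z‖_* = ‖Z‖_F`. Completing the square,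
`½‖M‖_*² + (2γ)⁻¹‖M - (1+γ)Z‖_F² ≥ (1+γ)/(2γ) ‖M - Z‖_F² + ½(1+γ)‖Z‖_F²`, with equality at `M = Z`.
-/

open scoped RealInnerProductSpace

namespace Matrix

lemma isHermitian_transpose_mul_self {ι κ R : Type*} [Fintype ι] [NonUnitalSemiring R]
    [StarRing R] [TrivialStar R] (M : Matrix ι κ R) : (Mᵀ * M).IsHermitian := by
  simpa [conjTranspose_eq_transpose_of_trivial] using isHermitian_conjTranspose_mul_self M

lemma eigenvalues_transpose_mul_self_nonneg {ι κ : Type*} [Fintype ι] [Fintype κ]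
    [DecidableEq κ] (M : Matrix ι κ ℝ) (j : κ) :
    0 ≤ (isHermitian_transpose_mul_self M).eigenvalues j := by
  have h := posSemidef_conjTranspose_mul_self M
  rw [conjTranspose_eq_transpose_of_trivial] at h
  exact h.eigenvalues_nonneg j

lemma sum_sq_mulVec_eq_dotProduct {ι κ R : Type*} [Fintype ι] [Fintype κ] [CommSemiring R]
    (Y : Matrix ι κ R) (x : κ → R) : ∑ i, (Y *ᵥ x) i ^ 2 = x ⬝ᵥ ((Yᵀ * Y) *ᵥ x) := by
  rw [← mulVec_mulVec, dotProduct_mulVec, vecMul_transpose, dotProduct_comm]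
  simp only [dotProduct, sq]

lemma sum_sq_mulVec_eq_sum_eigenvalues_mul {ι κ : Type*} [Fintype ι] [Fintype κ] [DecidableEq κ]
    (Y : Matrix ι κ ℝ) (x : EuclideanSpace ℝ κ) :
    ∑ i, (Y *ᵥ x) i ^ 2 = ∑ j, (isHermitian_transpose_mul_self Y).eigenvalues j *
      ⟪(isHermitian_transpose_mul_self Y).eigenvectorBasis j, x⟫ ^ 2 := by
  set hA := isHermitian_transpose_mul_self Y
  set b := hA.eigenvectorBasis
  have hAx : (Yᵀ * Y) *ᵥ x = ∑ j, (hA.eigenvalues j * ⟪b j, x⟫) • ⇑(b j) := by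
    conv_lhs => rw [← b.sum_repr' x]
    simp [WithLp.ofLp_sum, mulVec_sum, mulVec_smul, b, hA.mulVec_eigenvectorBasis, smul_smul,
      mul_comm]
  rw [sum_sq_mulVec_eq_dotProduct, hAx, dotProduct_sum]
  refine sum_congr rfl fun j _ => ?_
  rw [dotProduct_smul, smul_eq_mul, sq, ← mul_assoc, EuclideanSpace.inner_eq_star_dotProduct,
    star_trivial]

end Matrix

lemma List.sum_range_getD_eq_sum_map {α β : Type*} [AddCommMonoid β] (f : α → β) {d : α}
    (hf : f d = 0) :
    ∀ (L : List α) {N : ℕ}, L.length ≤ N → ∑ i ∈ Finset.range N, f (L.getD i d) = (L.map f).sum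
  | [], N, _ => by simp [hf]
  | a :: t, N, hN => by
    obtain ⟨N, rfl⟩ : ∃ N', N = N' + 1 := ⟨N - 1, by simp at hN; omega⟩
    rw [Finset.sum_range_succ', List.map_cons, List.sum_cons, add_comm]
    simp only [List.getD_cons_zero, List.getD_cons_succ]
    rw [sum_range_getD_eq_sum_map f hf t (by simpa using hN)]

section SingularValues

variable {n m : ℕ} (M : Matrix (Fin n) (Fin m) ℝ)

noncomputable def svList : List ℝ :=
  (List.ofFn fun j : Fin m => √((isHermitian_transpose_mul_self M).eigenvalues j)).mergeSort
    (fun a b => decide (a ≥ b))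

lemma svList_perm : (svList M).Perm
    (List.ofFn fun j : Fin m => √((isHermitian_transpose_mul_self M).eigenvalues j)) :=
  List.mergeSort_perm _ _

lemma sv_eq_getD (i : ℕ) : sv M i = (svList M).getD i 0 := rfl

lemma sv_nonneg (i : ℕ) : 0 ≤ sv M i := by
  rw [sv_eq_getD, List.getD_eq_getElem?_getD]
  cases h : (svList M)[i]? with
  | none => simp
  | some a =>
    have := (svList_perm M).mem_iff.mp (List.mem_of_getElem? h)
    obtain ⟨j, rfl⟩ := List.mem_ofFn.mp this
    exact Real.sqrt_nonneg _

lemma sv_antitone : Antitone (sv M) := by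
  intro i j hij
  have hsorted : (svList M).Pairwise (fun a b => a ≥ b) :=
    (List.pairwise_mergeSort (fun a b c hab hbc => by simp_all; linarith)
      (fun a b => by simpa using le_total b a) _).imp (by simp)
  rcases lt_or_ge j (svList M).length with hj | hj
  · rcases hij.lt_or_eq with hij | rfl
    · rw [sv_eq_getD, sv_eq_getD, List.getD_eq_getElem _ _ hj,
        List.getD_eq_getElem _ _ (hij.trans hj)]
      exact List.pairwise_iff_getElem.mp hsorted i j (hij.trans hj) hj hij
    · rfl
  · rw [sv_eq_getD M j, List.getD_eq_default _ _ hj]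
    exact sv_nonneg M i

lemma sum_range_sv {N : ℕ} (hN : m ≤ N) (f : ℝ → ℝ) (hf : f 0 = 0) :
    ∑ i ∈ range N, f (sv M i) =
      ∑ j, f √((isHermitian_transpose_mul_self M).eigenvalues j) := by
  simp only [sv_eq_getD]
  rw [List.sum_range_getD_eq_sum_map f hf _ (by simpa [svList, List.length_mergeSort] using hN),
    ((svList_perm M).map f).sum_eq, List.map_ofFn, List.sum_ofFn]
  rfl

end SingularValues

section Frobenius

variable {n m : ℕ}

lemma fro_nonneg (M : Matrix (Fin n) (Fin m) ℝ) : 0 ≤ fro M := Real.sqrt_nonneg _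

lemma fro_sq (M : Matrix (Fin n) (Fin m) ℝ) : fro M ^ 2 = ∑ i, ∑ j, M i j ^ 2 :=
  Real.sq_sqrt (by positivity)

lemma fro_eq_zero_iff {M : Matrix (Fin n) (Fin m) ℝ} : fro M = 0 ↔ M = 0 := by
  rw [fro, Real.sqrt_eq_zero (by positivity),
    Fintype.sum_eq_zero_iff_of_nonneg (fun _ => by positivity), ← Matrix.ext_iff]
  simp only [funext_iff, Pi.zero_apply, Matrix.zero_apply]
  exact forall_congr' fun i => by
    rw [Fintype.sum_eq_zero_iff_of_nonneg (fun _ => sq_nonneg _)]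
    simp [funext_iff]

lemma fro_smul (c : ℝ) (M : Matrix (Fin n) (Fin m) ℝ) : fro (c • M) = |c| * fro M := by
  simp only [fro, Matrix.smul_apply, smul_eq_mul, mul_pow, ← mul_sum]
  rw [Real.sqrt_mul (sq_nonneg c), Real.sqrt_sq_eq_abs]

lemma ip_self (M : Matrix (Fin n) (Fin m) ℝ) : ip M M = fro M ^ 2 := by
  rw [ip, fro_sq]
  simp only [sq]

lemma ip_smul_right (c : ℝ) (M Y : Matrix (Fin n) (Fin m) ℝ) : ip M (c • Y) = c * ip M Y := by
  simp only [ip, Matrix.smul_apply, smul_eq_mul, mul_sum]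
  exact sum_congr rfl fun _ _ => sum_congr rfl fun _ _ => by ring

lemma ip_le_fro_mul_fro (M Y : Matrix (Fin n) (Fin m) ℝ) : ip M Y ≤ fro M * fro Y := by
  simpa only [ip, fro, ← Fintype.sum_prod_type'] using
    Real.sum_mul_le_sqrt_mul_sqrt univ (fun p : Fin n × Fin m => M p.1 p.2) (fun p => Y p.1 p.2)

lemma ip_eq_trace (M Y : Matrix (Fin n) (Fin m) ℝ) : ip M Y = trace (Mᵀ * Y) := by
  simp only [ip, trace, Matrix.diag, mul_apply, transpose_apply]
  exact sum_comm

lemma ip_mul_right_of_mul_transpose_eq_one {Q : Matrix (Fin m) (Fin m) ℝ} (hQ : Q * Qᵀ = 1)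
    (M Y : Matrix (Fin n) (Fin m) ℝ) : ip (M * Q) (Y * Q) = ip M Y := by
  have hcancel : Y * Q * (Qᵀ * Mᵀ) = Y * Mᵀ := by
    rw [Matrix.mul_assoc, ← Matrix.mul_assoc Q, hQ, Matrix.one_mul]
  rw [ip_eq_trace, ip_eq_trace, transpose_mul, trace_mul_comm, hcancel, trace_mul_comm]

lemma ip_eq_sum_dotProduct_mulVec (b : OrthonormalBasis (Fin m) ℝ (EuclideanSpace ℝ (Fin m)))
    (M Y : Matrix (Fin n) (Fin m) ℝ) : ip M Y = ∑ j, (M *ᵥ b j) ⬝ᵥ (Y *ᵥ b j) := by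
  set Q := (EuclideanSpace.basisFun (Fin m) ℝ).toBasis.toMatrix b
  have hQ : Q * Qᵀ = 1 := by
    simpa [star_eq_conjTranspose] using mem_unitaryGroup_iff.mp
      ((EuclideanSpace.basisFun (Fin m) ℝ).toMatrix_orthonormalBasis_mem_unitary b)
  rw [← ip_mul_right_of_mul_transpose_eq_one hQ, ip, sum_comm]
  simp [Q, dotProduct, mul_apply, mulVec, Module.Basis.toMatrix_apply]

lemma truncFro_nonneg (r : ℕ) (M : Matrix (Fin n) (Fin m) ℝ) : 0 ≤ truncFro r M :=
  Real.sqrt_nonneg _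

lemma truncFro_sq (r : ℕ) (M : Matrix (Fin n) (Fin m) ℝ) :
    truncFro r M ^ 2 = ∑ i ∈ range r, sv M i ^ 2 :=
  Real.sq_sqrt (sum_nonneg fun _ _ => sq_nonneg _)

lemma sum_range_sv_sq {N : ℕ} (hN : m ≤ N) (M : Matrix (Fin n) (Fin m) ℝ) :
    ∑ i ∈ range N, sv M i ^ 2 = fro M ^ 2 := by
  rw [sum_range_sv M hN (· ^ 2) (by simp), ← ip_self, ip_eq_trace,
    (isHermitian_transpose_mul_self M).trace_eq_sum_eigenvalues]
  simp [Real.sq_sqrt (eigenvalues_transpose_mul_self_nonneg M _)]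

lemma truncFro_le_fro (r : ℕ) (M : Matrix (Fin n) (Fin m) ℝ) : truncFro r M ≤ fro M := by
  rw [← sq_le_sq₀ (truncFro_nonneg r M) (fro_nonneg M), truncFro_sq,
    ← sum_range_sv_sq (le_max_left m r)]
  exact sum_le_sum_of_subset_of_nonneg (range_subset_range.2 (le_max_right m r))
    fun _ _ _ => sq_nonneg _

lemma fro_sq_le_mul_truncFro_sq {r : ℕ} (hr : 1 ≤ r) (M : Matrix (Fin n) (Fin m) ℝ) :
    fro M ^ 2 ≤ m * truncFro r M ^ 2 := by
  rw [← sum_range_sv_sq le_rfl, truncFro_sq]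
  calc ∑ i ∈ range m, sv M i ^ 2 ≤ ∑ _i ∈ range m, sv M 0 ^ 2 :=
        sum_le_sum fun i _ => pow_le_pow_left₀ (sv_nonneg M i) (sv_antitone M (Nat.zero_le i)) 2
    _ = m * sv M 0 ^ 2 := by simp
    _ ≤ m * ∑ i ∈ range r, sv M i ^ 2 := by
        gcongr
        exact single_le_sum (f := fun i => sv M i ^ 2) (fun _ _ => sq_nonneg _) (by simpa)

end Frobenius

section KyFan

variable {n m : ℕ} (Y : Matrix (Fin n) (Fin m) ℝ)

lemma sum_eigenvalues_mul_le_sum_range_sv_sq {r : ℕ} (t : Fin m → ℝ) (ht0 : ∀ j, 0 ≤ t j)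
    (ht1 : ∀ j, t j ≤ 1) (hsum : ∑ j, t j ≤ r) :
    ∑ j, (isHermitian_transpose_mul_self Y).eigenvalues j * t j ≤
      ∑ i ∈ range r, sv Y i ^ 2 := by
  set μ := (isHermitian_transpose_mul_self Y).eigenvalues
  -- With `θ = σᵣ²`: `μ t ≤ (μ - θ)⁺ + θ t` for `t ∈ [0, 1]`, and `∑ⱼ (μⱼ - θ)⁺` is the excess
  -- of the `r` largest values `σᵢ²` over `θ`.
  set θ := sv Y (r - 1) ^ 2
  have hθ : 0 ≤ θ := sq_nonneg _
  have hexcess : ∑ j, max (μ j - θ) 0 = ∑ i ∈ range r, (sv Y i ^ 2 - θ) := by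
    have hsv : ∑ j, max (μ j - θ) 0 = ∑ i ∈ range (max m r), max (sv Y i ^ 2 - θ) 0 := by
      rw [sum_range_sv Y (le_max_left m r) (fun x => max (x ^ 2 - θ) 0) (by simpa using hθ)]
      simp only [Real.sq_sqrt (eigenvalues_transpose_mul_self_nonneg Y _), μ]
    rw [hsv, ← sum_subset (range_subset_range.2 (le_max_right m r))]
    · refine sum_congr rfl fun i hi => max_eq_left (sub_nonneg.2 ?_)
      exact pow_le_pow_left₀ (sv_nonneg Y _) (sv_antitone Y (by simp at hi; omega)) 2
    · intro i _ hi
      refine max_eq_right (sub_nonpos.2 ?_)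
      exact pow_le_pow_left₀ (sv_nonneg Y _) (sv_antitone Y (by simp at hi; omega)) 2
  calc ∑ j, μ j * t j ≤ ∑ j, (max (μ j - θ) 0 + θ * t j) := by
        refine sum_le_sum fun j _ => ?_
        nlinarith [mul_nonneg (sub_nonneg.2 (le_max_left (μ j - θ) 0)) (ht0 j),
          mul_nonneg (le_max_right (μ j - θ) 0) (sub_nonneg.2 (ht1 j))]
    _ = ∑ i ∈ range r, (sv Y i ^ 2 - θ) + θ * ∑ j, t j := by
        rw [sum_add_distrib, mul_sum, hexcess]
    _ ≤ ∑ i ∈ range r, (sv Y i ^ 2 - θ) + θ * r := by gcongr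
    _ = ∑ i ∈ range r, sv Y i ^ 2 := by simp [sum_sub_distrib]; ring

lemma sum_sq_mulVec_le_sum_range_sv_sq {ι : Type*} {v : ι → EuclideanSpace ℝ (Fin m)}
    (hv : Orthonormal ℝ v) {s : Finset ι} {r : ℕ} (hs : s.card ≤ r) :
    ∑ l ∈ s, ∑ i, (Y *ᵥ v l) i ^ 2 ≤ ∑ i ∈ range r, sv Y i ^ 2 := by
  set b := (isHermitian_transpose_mul_self Y).eigenvectorBasis
  set t : Fin m → ℝ := fun j => ∑ l ∈ s, ⟪v l, b j⟫ ^ 2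
  have hquad : ∑ l ∈ s, ∑ i, (Y *ᵥ v l) i ^ 2 =
      ∑ j, (isHermitian_transpose_mul_self Y).eigenvalues j * t j := by
    simp only [sum_sq_mulVec_eq_sum_eigenvalues_mul, t, mul_sum, real_inner_comm]
    exact sum_comm
  have hbessel (j : Fin m) : t j ≤ 1 := by
    simpa [b.orthonormal.1 j] using hv.sum_inner_products_le (b j) (s := s)
  have hparseval : ∑ j, t j = s.card := by
    simp only [t]
    rw [sum_comm]
    simp [b.sum_sq_inner_left, hv.1]
  rw [hquad]
  exact sum_eigenvalues_mul_le_sum_range_sv_sq Y t (fun j => sum_nonneg fun _ _ => sq_nonneg _)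
    hbessel (by rw [hparseval]; exact_mod_cast hs)

end KyFan

section Duality

variable {n m : ℕ}

lemma bddAbove_ip_of_truncFro_le_one {r : ℕ} (hr : 1 ≤ r) (M : Matrix (Fin n) (Fin m) ℝ) :
    BddAbove {c : ℝ | ∃ Y, truncFro r Y ≤ 1 ∧ c = ip M Y} := by
  refine ⟨fro M * √m, ?_⟩
  rintro _ ⟨Y, hY, rfl⟩
  have hYm : fro Y ≤ √m := by
    rw [Real.le_sqrt (fro_nonneg Y) (Nat.cast_nonneg m)]
    have ht : truncFro r Y ^ 2 ≤ 1 := pow_le_one₀ (truncFro_nonneg r Y) hY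
    nlinarith [fro_sq_le_mul_truncFro_sq hr Y, mul_le_mul_of_nonneg_left ht (Nat.cast_nonneg m)]
  exact (ip_le_fro_mul_fro M Y).trans (mul_le_mul_of_nonneg_left hYm (fro_nonneg M))

lemma fro_le_lowRankFro {r : ℕ} (hr : 1 ≤ r) (M : Matrix (Fin n) (Fin m) ℝ) :
    fro M ≤ lowRankFro r M := by
  refine le_csSup (bddAbove_ip_of_truncFro_le_one hr M) ⟨(fro M)⁻¹ • M, ?_, ?_⟩
  · refine (truncFro_le_fro r _).trans ?_
    rw [fro_smul, abs_inv, abs_of_nonneg (fro_nonneg M)]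
    exact inv_mul_le_one_of_le₀ le_rfl (fro_nonneg M)
  · rw [ip_smul_right, ip_self]
    rcases (fro_nonneg M).eq_or_lt with h | h
    · -- the witness is `0 = 0⁻¹ • 0`
      simp [← h]
    · field_simp

lemma ip_le_fro_mul_truncFro_of_rank_le {r : ℕ} {Z : Matrix (Fin n) (Fin m) ℝ}
    (hZ : Z.rank ≤ r) (Y : Matrix (Fin n) (Fin m) ℝ) : ip Z Y ≤ fro Z * truncFro r Y := by
  set hA := isHermitian_transpose_mul_self Z
  set b := hA.eigenvectorBasis
  set S := univ.filter fun j => hA.eigenvalues j ≠ 0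
  have hS : S.card ≤ r := by
    rwa [← rank_transpose_mul_self, hA.rank_eq_card_non_zero_eigs, Fintype.card_subtype] at hZ
  have hker (j : Fin m) (hj : j ∉ S) : Z *ᵥ b j = 0 := by
    simp only [S, mem_filter, mem_univ, true_and, not_not] at hj
    have := SetLike.ext_iff.mp (ker_mulVecLin_transpose_mul_self Z) (b j)
    simp only [LinearMap.mem_ker, mulVecLin_apply] at this
    exact this.mp (by simp [b, hA.mulVec_eigenvectorBasis, hj])
  calc ip Z Y = ∑ j ∈ S, (Z *ᵥ b j) ⬝ᵥ (Y *ᵥ b j) := by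
        rw [ip_eq_sum_dotProduct_mulVec b, ← sum_subset (subset_univ S)]
        intro j _ hj
        rw [hker j hj, zero_dotProduct]
    _ ≤ √(∑ j ∈ S, ∑ i, (Z *ᵥ b j) i ^ 2) * √(∑ j ∈ S, ∑ i, (Y *ᵥ b j) i ^ 2) := by
        simpa only [sum_product, dotProduct] using Real.sum_mul_le_sqrt_mul_sqrt (S ×ˢ univ)
          (fun p => (Z *ᵥ b p.1) p.2) (fun p => (Y *ᵥ b p.1) p.2)
    _ ≤ √(fro Z ^ 2) * √(truncFro r Y ^ 2) := by
        gcongr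
        · rw [← ip_self, ip_eq_sum_dotProduct_mulVec b]
          simp only [dotProduct, ← sq]
          exact sum_le_sum_of_subset_of_nonneg (subset_univ S) fun _ _ _ =>
            sum_nonneg fun _ _ => sq_nonneg _
        · rw [truncFro_sq]
          exact sum_sq_mulVec_le_sum_range_sv_sq Y b.orthonormal hS
    _ = fro Z * truncFro r Y := by
        rw [Real.sqrt_sq (fro_nonneg Z), Real.sqrt_sq (truncFro_nonneg r Y)]

lemma lowRankFro_le_fro_of_rank_le {r : ℕ} {Z : Matrix (Fin n) (Fin m) ℝ} (hZ : Z.rank ≤ r) :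
    lowRankFro r Z ≤ fro Z := by
  refine Real.sSup_le ?_ (fro_nonneg Z)
  rintro _ ⟨Y, hY, rfl⟩
  calc ip Z Y ≤ fro Z * truncFro r Y := ip_le_fro_mul_truncFro_of_rank_le hZ Y
    _ ≤ fro Z := mul_le_of_le_one_right (fro_nonneg Z) hY

lemma lowRankFro_eq_fro_of_rank_le {r : ℕ} (hr : 1 ≤ r) {Z : Matrix (Fin n) (Fin m) ℝ}
    (hZ : Z.rank ≤ r) : lowRankFro r Z = fro Z :=
  (lowRankFro_le_fro_of_rank_le hZ).antisymm (fro_le_lowRankFro hr Z)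

end Duality

section Prox

variable {n m : ℕ}

lemma half_fro_sq_add_fro_sq_sub_smul {γ : ℝ} (hγ : γ ≠ 0) (M Z : Matrix (Fin n) (Fin m) ℝ) :
    2⁻¹ * fro M ^ 2 + (2 * γ)⁻¹ * fro (M - (1 + γ) • Z) ^ 2 =
      (1 + γ) / (2 * γ) * fro (M - Z) ^ 2 + 2⁻¹ * (1 + γ) * fro Z ^ 2 := by
  simp only [fro_sq, mul_sum, ← sum_add_distrib, Matrix.sub_apply, Matrix.smul_apply, smul_eq_mul]
  refine sum_congr rfl fun i _ => sum_congr rfl fun j _ => ?_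
  field_simp
  ring

lemma prox_objective_add_le {g : Matrix (Fin n) (Fin m) ℝ → ℝ} {Z : Matrix (Fin n) (Fin m) ℝ}
    (hg : ∀ M, fro M ^ 2 ≤ g M) (hgZ : g Z = fro Z ^ 2) {γ : ℝ} (hγ : γ ≠ 0)
    (M : Matrix (Fin n) (Fin m) ℝ) :
    2⁻¹ * g Z + (2 * γ)⁻¹ * fro (Z - (1 + γ) • Z) ^ 2 + (1 + γ) / (2 * γ) * fro (M - Z) ^ 2 ≤
      2⁻¹ * g M + (2 * γ)⁻¹ * fro (M - (1 + γ) • Z) ^ 2 := by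
  have hM := half_fro_sq_add_fro_sq_sub_smul hγ M Z
  have hZ := half_fro_sq_add_fro_sq_sub_smul hγ Z Z
  rw [sub_self, fro_eq_zero_iff.mpr rfl] at hZ
  linarith [hg M]

end Prox

theorem prox_lowRankFro_of_rank_le_general {n m r : ℕ} (hr1 : 1 ≤ r)
    (γ : ℝ) (hγ : 0 < γ) (Z : Matrix (Fin n) (Fin m) ℝ) (hZ : Z.rank ≤ r) :
    (∀ M : Matrix (Fin n) (Fin m) ℝ,
      2⁻¹ * lowRankFro r Z ^ 2 + (2 * γ)⁻¹ * fro (Z - (1 + γ) • Z) ^ 2 ≤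
      2⁻¹ * lowRankFro r M ^ 2 + (2 * γ)⁻¹ * fro (M - (1 + γ) • Z) ^ 2) ∧
    (∀ M : Matrix (Fin n) (Fin m) ℝ,
      2⁻¹ * lowRankFro r M ^ 2 + (2 * γ)⁻¹ * fro (M - (1 + γ) • Z) ^ 2 =
      2⁻¹ * lowRankFro r Z ^ 2 + (2 * γ)⁻¹ * fro (Z - (1 + γ) • Z) ^ 2 → M = Z) := by
  have hgap := prox_objective_add_le (g := fun M => lowRankFro r M ^ 2)
    (fun M => pow_le_pow_left₀ (fro_nonneg M) (fro_le_lowRankFro hr1 M) 2)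
    (by rw [lowRankFro_eq_fro_of_rank_le hr1 hZ]) hγ.ne'
  have hc : 0 < (1 + γ) / (2 * γ) := by positivity
  refine ⟨fun M => le_of_add_le_of_nonneg_left (hgap M) (by positivity), fun M hM => ?_⟩
  have hMZ : fro (M - Z) ^ 2 ≤ 0 := by
    have := hgap M
    rw [hM] at this
    exact nonpos_of_mul_nonpos_right (by linarith) hc
  exact sub_eq_zero.mp (fro_eq_zero_iff.mp (pow_eq_zero_iff two_ne_zero |>.mp
    (hMZ.antisymm (sq_nonneg _))))

/-- for `g = ½‖·‖_{F,r*}²`, any `γ > 0` and any `Z` with `rank Z ≤ r`,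
`prox_{γg}((1+γ) Z) = Z`, i.e. `Z` is the unique minimizer of
`M ↦ g(M) + (1/(2γ))‖M − (1+γ)Z‖_F²`. -/
theorem prox_lowRankFro_of_rank_le {n m r : ℕ} (hr1 : 1 ≤ r) (hr2 : r ≤ min n m)
    (γ : ℝ) (hγ : 0 < γ) (Z : Matrix (Fin n) (Fin m) ℝ) (hZ : Z.rank ≤ r) :
    (∀ M : Matrix (Fin n) (Fin m) ℝ,
      2⁻¹ * lowRankFro r Z ^ 2 + (2 * γ)⁻¹ * fro (Z - (1 + γ) • Z) ^ 2 ≤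
      2⁻¹ * lowRankFro r M ^ 2 + (2 * γ)⁻¹ * fro (M - (1 + γ) • Z) ^ 2) ∧
    (∀ M : Matrix (Fin n) (Fin m) ℝ,
      2⁻¹ * lowRankFro r M ^ 2 + (2 * γ)⁻¹ * fro (M - (1 + γ) • Z) ^ 2 =
      2⁻¹ * lowRankFro r Z ^ 2 + (2 * γ)⁻¹ * fro (Z - (1 + γ) • Z) ^ 2 → M = Z) :=
  prox_lowRankFro_of_rank_le_general hr1 γ hγ Z hZ
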